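/- arXiv:1311.3416 — 3 statements merged into one kernel-verified Lean document; each statement's English description precedes it below -/
import Mathlib

section
/- Let h ≥ 1 and m > t ≥ 1. Then the integers j0 = 2^{h(m-t)} - 1 and j1 = 2^{h(m-t)} - 2 are relatively prime, and lcm((2^{hm}-1)/gcd(j0, 2^{hm}-1), (2^{hm}-1)/gcd(j1, 2^{hm}-1)) = 2^{hm} - 1. -/
theorem stmt_13 (h m t : ℕ) (hh : 1 ≤ h) (ht : 1 ≤ t) (htm : t < m) :
    Nat.Coprime (2 ^ (h * (m - t)) - 1) (2 ^ (h * (m - t)) - 2) ∧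
      Nat.lcm ((2 ^ (h * m) - 1) / Nat.gcd (2 ^ (h * (m - t)) - 1) (2 ^ (h * m) - 1))
        ((2 ^ (h * m) - 1) / Nat.gcd (2 ^ (h * (m - t)) - 2) (2 ^ (h * m) - 1)) =
      2 ^ (h * m) - 1 := by
  set e := h * (m - t) with he
  have he1 : 1 ≤ e := by
    have : 1 ≤ m - t := by omega
    calc 1 = 1 * 1 := by ring
    _ ≤ h * (m - t) := Nat.mul_le_mul hh this
  have h2e : 2 ≤ 2 ^ e := by
    calc 2 = 2 ^ 1 := rfl
    _ ≤ 2 ^ e := Nat.pow_le_pow_right (by norm_num) he1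
  have hj : 2 ^ e - 1 = (2 ^ e - 2) + 1 := by omega
  have hcop : Nat.Coprime (2 ^ e - 1) (2 ^ e - 2) := by
    rw [hj]
    unfold Nat.Coprime
    rw [Nat.gcd_comm, Nat.add_comm, Nat.gcd_add_self_right, Nat.gcd_one_right]
  refine ⟨hcop, ?_⟩
  set N := 2 ^ (h * m) - 1 with hNdef
  have hN0 : 0 < N := by
    have : 2 ≤ 2 ^ (h * m) := by
      calc 2 = 2 ^ 1 := rfl
      _ ≤ 2 ^ (h * m) := Nat.pow_le_pow_right (by norm_num) (by nlinarith)
    omega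
  set g0 := Nat.gcd (2 ^ e - 1) N with hg0def
  set g1 := Nat.gcd (2 ^ e - 2) N with hg1def
  have hg : Nat.Coprime g0 g1 :=
    (hcop.coprime_dvd_left (Nat.gcd_dvd_left _ _)).coprime_dvd_right (Nat.gcd_dvd_left _ _)
  have hd : g0 * g1 ∣ N :=
    hg.mul_dvd_of_dvd_of_dvd (Nat.gcd_dvd_right _ _) (Nat.gcd_dvd_right _ _)
  obtain ⟨C, hC⟩ := hd
  have hg0 : 0 < g0 := Nat.gcd_pos_of_pos_right _ hN0
  have hg1 : 0 < g1 := Nat.gcd_pos_of_pos_right _ hN0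
  have hA : N / g0 = g1 * C := by
    rw [hC, mul_assoc, Nat.mul_div_cancel_left _ hg0]
  have hB : N / g1 = g0 * C := by
    rw [hC, show g0 * g1 * C = g1 * (g0 * C) by ring, Nat.mul_div_cancel_left _ hg1]
  rw [hA, hB, mul_comm g1 C, mul_comm g0 C, Nat.lcm_mul_left, hg.symm.lcm_eq_mul, hC]
  ring
end

section
/- Let h, m, t be positive integers with t ≤ m - 1, let q = 2^h, and set j0 = (q^{m-t} - 1)/(q - 1). Then for every i with 0 ≤ i ≤ h, the weight of the q-ary expansion of j0·(q - 1)·2^i equals (m - t)(q - 1). -/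
lemma ofDigits_replicate (q k : ℕ) (hq : 2 ≤ q) :
    Nat.ofDigits q (List.replicate k (q - 1)) = q ^ k - 1 := by
  induction k with
  | zero => simp
  | succ k ih =>
    rw [List.replicate_succ, Nat.ofDigits_cons, ih, pow_succ]
    have h1 : 1 ≤ q ^ k := Nat.one_le_pow _ _ (by omega)
    have h2 : 1 ≤ q ^ k * q := Nat.one_le_iff_ne_zero.mpr (by positivity)
    zify [show 1 ≤ q by omega, h1, h2]
    ring

lemma key (q n j : ℕ) (hq : 2 ≤ q) (hn : 1 ≤ n) (hj : 1 ≤ j) (hjq : j ≤ q) :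
    (Nat.digits q ((q ^ n - 1) * j)).sum = n * (q - 1) := by
  rcases eq_or_lt_of_le hj with h1 | h2
  · -- j = 1
    have hj1 : j = 1 := h1.symm
    subst hj1
    rw [mul_one]
    have hd : Nat.digits q (q ^ n - 1) = List.replicate n (q - 1) := by
      rw [← ofDigits_replicate q n hq]
      apply Nat.digits_ofDigits _ (by omega)
      · intro l hl
        rw [List.mem_replicate] at hl
        omega
      · intro hne
        rw [List.getLast_replicate]
        omega
    rw [hd, List.sum_replicate, smul_eq_mul]
  · -- 2 ≤ j
    have hj2 : 2 ≤ j := h2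
    obtain ⟨k, rfl⟩ : ∃ k, n = k + 1 := ⟨n - 1, by omega⟩
    have ha : 1 ≤ q ^ k := Nat.one_le_pow _ _ (by omega)
    have hof : Nat.ofDigits q ((q - j) :: (List.replicate k (q - 1) ++ [j - 1]))
        = (q ^ (k + 1) - 1) * j := by
      rw [Nat.ofDigits_cons, Nat.ofDigits_append, ofDigits_replicate q k hq]
      simp only [List.length_replicate, Nat.ofDigits_singleton]
      rw [pow_succ]
      set a := q ^ k with hadef
      have haj : a ≤ a * j := Nat.le_mul_of_pos_right _ (by omega)
      have haq : 1 ≤ a * q := Nat.one_le_iff_ne_zero.mpr (by positivity)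
      have hjaq : j ≤ a * q := le_trans hjq (Nat.le_mul_of_pos_left _ (by omega))
      zify [hjq, ha, (by omega : 1 ≤ j), haj, haq, hjaq]
      ring
    have hd : Nat.digits q ((q ^ (k + 1) - 1) * j)
        = (q - j) :: (List.replicate k (q - 1) ++ [j - 1]) := by
      rw [← hof]
      apply Nat.digits_ofDigits _ (by omega)
      · intro l hl
        simp only [List.mem_cons, List.mem_append, List.mem_replicate,
          List.mem_singleton, List.not_mem_nil, or_false] at hl
        rcases hl with h | ⟨_, h⟩ | h <;> omega
      · intro hne
        simp [List.getLast_append]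
        omega
    rw [hd]
    simp only [List.sum_cons, List.sum_append, List.sum_replicate, smul_eq_mul,
      List.sum_singleton, List.sum_nil, add_zero]
    rw [add_mul, one_mul]
    generalize k * (q - 1) = c
    omega

theorem stmt_18 (h m t : ℕ) (hh : 1 ≤ h) (ht : 1 ≤ t) (htm : t ≤ m - 1) (hm : 1 ≤ m)
    (i : ℕ) (hi : i ≤ h) :
    (Nat.digits (2 ^ h) ((((2 ^ h) ^ (m - t) - 1) / (2 ^ h - 1)) * (2 ^ h - 1) * 2 ^ i)).sum =
      (m - t) * (2 ^ h - 1) := by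
  have hq : 2 ≤ 2 ^ h := by
    calc 2 = 2 ^ 1 := (pow_one 2).symm
    _ ≤ 2 ^ h := Nat.pow_le_pow_right (by norm_num) hh
  have hdvd : (2 ^ h - 1) ∣ ((2 ^ h) ^ (m - t) - 1) := by
    have := Nat.sub_dvd_pow_sub_pow (2 ^ h) 1 (m - t)
    simpa using this
  rw [Nat.div_mul_cancel hdvd]
  exact key (2 ^ h) (m - t) (2 ^ i) hq (by omega) (Nat.one_le_two_pow)
    (Nat.pow_le_pow_right (by norm_num) hi)
end

section
/- Let h ≥ 1, q = 2^h, and m > t ≥ 1. Set j0 = (q^{m-t} - 1)/(q - 1) and j1 = (q^{m-t+1} - 1)/(q - 1) - 2. Then gcd(j0, j1) = 1. -/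
lemma geom_mul (q n : ℕ) (hq : 2 ≤ q) :
    (q - 1) * ∑ i ∈ Finset.range n, q ^ i = q ^ n - 1 := by
  induction n with
  | zero => simp
  | succ n ih =>
    rw [Finset.sum_range_succ, Nat.mul_add, ih]
    have h1 : 1 ≤ q ^ n := Nat.one_le_pow _ _ (by omega)
    have h2 : q ^ (n + 1) = q * q ^ n := by ring
    have h3 : q * q ^ n ≥ q ^ n := Nat.le_mul_of_pos_left _ (by omega)
    rw [Nat.sub_mul]
    omega

lemma geom_div (q n : ℕ) (hq : 2 ≤ q) :
    (q ^ n - 1) / (q - 1) = ∑ i ∈ Finset.range n, q ^ i := by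
  rw [← geom_mul q n hq, Nat.mul_div_cancel_left _ (by omega)]

theorem stmt_19 (h m t : ℕ) (hh : 1 ≤ h) (ht : 1 ≤ t) (htm : t < m) :
    Nat.Coprime (((2 ^ h) ^ (m - t) - 1) / (2 ^ h - 1))
      ((((2 ^ h) ^ (m - t + 1) - 1) / (2 ^ h - 1)) - 2) := by
  set q := 2 ^ h with hqdef
  have hq : 2 ≤ q := by
    calc 2 = 2 ^ 1 := by norm_num
    _ ≤ 2 ^ h := Nat.pow_le_pow_right (by norm_num) hh
  set k := m - t with hk
  have hk1 : 1 ≤ k := by omega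
  rw [geom_div q k hq, geom_div q (k + 1) hq]
  set S := ∑ i ∈ Finset.range k, q ^ i with hS
  have hsucc : ∑ i ∈ Finset.range (k + 1), q ^ i = q * S + 1 := by
    rw [Finset.sum_range_succ', Finset.mul_sum]
    simp [pow_succ, mul_comm]
  rw [hsucc]
  have hS1 : 1 ≤ S := by
    calc 1 = ∑ i ∈ Finset.range 1, q ^ i := by simp
    _ ≤ S := Finset.sum_le_sum_of_subset (by
        apply Finset.range_subset_range.mpr; omega)
  have heq : q * S + 1 - 2 = q * S - 1 := by omega
  rw [heq]
  rw [Nat.Coprime]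
  by_contra hne
  set d := Nat.gcd S (q * S - 1) with hd
  have h1 : d ∣ S := Nat.gcd_dvd_left _ _
  have h2 : d ∣ q * S - 1 := Nat.gcd_dvd_right _ _
  have h3 : d ∣ q * S := Dvd.dvd.mul_left h1 q
  have hqS : 1 ≤ q * S := by
    have := Nat.mul_le_mul hq hS1; omega
  have h4 : d ∣ 1 := by
    have := Nat.dvd_sub h3 h2
    rwa [Nat.sub_sub_self hqS] at this
  exact hne (Nat.dvd_one.mp h4)
end
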